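/- In the simply-typed scheme-calculus, the one-step beta-reduction relation is not confluent: if A ∉ Γ and t, u are schemes of type A in Γ, then the scheme ((λ_A λ_A ⟨A⟩) t u) in context Γ reduces (in several steps) both to t and to u; in particular for distinct normal schemes t ≠ u of type A, confluence fails. -/
import Mathlib


/-! Simply-typed scheme-calculus. -/

inductive STy : Type
  | atom : ℕ → STy
  | arr : STy → STy → STy
deriving DecidableEq

inductive Schm : Type
  | var : STy → Schm
  | lam : STy → Schm → Schm
  | app : Schm → Schm → Schm
deriving DecidableEq

/-- Typing rules of the simply-typed scheme-calculus (contexts are finite sets). -/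
inductive Typed : Finset STy → Schm → STy → Prop
  | var {Γ A} : A ∈ Γ → Typed Γ (.var A) A
  | lam {Γ A B t} : Typed (insert A Γ) t B → Typed Γ (.lam A t) (.arr A B)
  | app {Γ A B t u} : Typed Γ t (.arr A B) → Typed Γ u A → Typed Γ (.app t u) B

/-- `SSubst u A Γ t v` means `v ∈ [u/A]_Γ t` (non-deterministic substitution). -/
inductive SSubst (u : Schm) (A : STy) : Finset STy → Schm → Schm → Prop
  | varKeep {Γ} : A ∈ Γ → SSubst u A Γ (.var A) (.var A)
  | varSub {Γ} : SSubst u A Γ (.var A) u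
  | varOther {Γ B} : B ≠ A → SSubst u A Γ (.var B) (.var B)
  | lam {Γ C t t'} : SSubst u A (insert C Γ) t t' → SSubst u A Γ (.lam C t) (.lam C t')
  | app {Γ t t' s s'} : SSubst u A Γ t t' → SSubst u A Γ s s' →
      SSubst u A Γ (.app t s) (.app t' s')

/-- One-step β-reduction of schemes in context. -/
inductive Red : Finset STy → Schm → Schm → Prop
  | beta {Γ A t u v} : SSubst u A Γ t v → Red Γ (.app (.lam A t) u) v
  | appL {Γ t t' u} : Red Γ t t' → Red Γ (.app t u) (.app t' u)
  | appR {Γ t u u'} : Red Γ u u' → Red Γ (.app t u) (.app t u')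
  | lam {Γ A t t'} : Red (insert A Γ) t t' → Red Γ (.lam A t) (.lam A t')

/-- Multi-step β-reduction. -/
def RedStar (Γ : Finset STy) : Schm → Schm → Prop := Relation.ReflTransGen (Red Γ)

/-- A well-typed scheme admits the identity substitution. -/
lemma ssubst_self (u : Schm) (A : STy) {Γ : Finset STy} {t : Schm} {B : STy}
    (h : Typed Γ t B) : SSubst u A Γ t t := by
  induction h with
  | var hB =>
    rename_i Γ' C
    by_cases hCA : C = A
    · subst hCA; exact SSubst.varKeep hB
    · exact SSubst.varOther hCA
  | lam _ ih => exact SSubst.lam ih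
  | app _ _ ih1 ih2 => exact SSubst.app ih1 ih2

lemma redstar_normal {Γ : Finset STy} {t w : Schm} (hnt : ∀ t', ¬ Red Γ t t')
    (h : RedStar Γ t w) : w = t := by
  induction h with
  | refl => rfl
  | tail _ hstep ih => subst ih; exact absurd hstep (hnt _)

/-- non-confluence. If `A ∉ Γ` and `t, u` have type `A` in `Γ`, then
`((λ_A λ_A ⟨A⟩) t u)_Γ` reduces both to `t` and to `u`; in particular, if `t` and `u` are
distinct normal schemes, `t` and `u` have no common reduct, so confluence fails. -/
theorem scheme_calculus_not_confluent (Γ : Finset STy) (A : STy) (hA : A ∉ Γ)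
    (t u : Schm) (ht : Typed Γ t A) (hu : Typed Γ u A) :
    RedStar Γ (.app (.app (.lam A (.lam A (.var A))) t) u) t ∧
    RedStar Γ (.app (.app (.lam A (.lam A (.var A))) t) u) u ∧
    ((∀ t', ¬ Red Γ t t') → (∀ u', ¬ Red Γ u u') → t ≠ u →
      ¬ ∃ w, RedStar Γ t w ∧ RedStar Γ u w) := by
  refine ⟨?_, ?_, ?_⟩
  · -- reduce to t: (λλ⟨A⟩) t → λ_A t, then (λ_A t) u → t (identity substitution)
    refine Relation.ReflTransGen.head (Red.appL (Red.beta (SSubst.lam SSubst.varSub))) ?_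
    exact Relation.ReflTransGen.single (Red.beta (ssubst_self u A ht))
  · -- reduce to u: (λλ⟨A⟩) t → λ_A ⟨A⟩, then (λ_A ⟨A⟩) u → u
    refine Relation.ReflTransGen.head
      (Red.appL (Red.beta (SSubst.lam (SSubst.varKeep (Finset.mem_insert_self A Γ))))) ?_
    exact Relation.ReflTransGen.single (Red.beta SSubst.varSub)
  · intro hnt hnu hne ⟨w, hw1, hw2⟩
    have e1 := redstar_normal hnt hw1
    have e2 := redstar_normal hnu hw2
    exact hne (e1.symm.trans e2)
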